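/- For every integer i ≥ 3, every axis-aligned square S, and every triangle T of Slicing(i) of S, there exists at least one tile t of Tiling(4φ(i) − 2) of S such that t ⊆ T and one side of t is contained in a side of S. -/

import Mathlib

open Real

noncomputable section

/-- Points of the Euclidean plane. -/
abbrev Pt := EuclideanSpace ℝ (Fin 2)

/-- The unit vector in direction angle `a`. -/
def unitDir (a : ℝ) : Pt := WithLp.toLp 2 ![Real.cos a, Real.sin a]

/-- The closed angular sector with apex `p`, swept clockwise from the half-line in
direction angle `a` through angle `θ` (it consists of the points lying on the half-lines
from `p` in the direction angles `a - t` for `0 ≤ t ≤ θ`, including both bounding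
half-lines). -/
def sector (p : Pt) (a θ : ℝ) : Set Pt :=
  {q | ∃ r : ℝ, 0 ≤ r ∧ ∃ t : ℝ, 0 ≤ t ∧ t ≤ θ ∧ q = p + r • unitDir (a - t)}

/-- The axis-aligned square with center `q` and side length `x`. -/
def square (q : Pt) (x : ℝ) : Set Pt :=
  {y | y 0 ∈ Set.Icc (q 0 - x / 2) (q 0 + x / 2) ∧ y 1 ∈ Set.Icc (q 1 - x / 2) (q 1 + x / 2)}

/-- The tile in position `(a, b)` of `Tiling(m)` of the square with center `q` and side
length `x`: the `(a, b)`-th of the `4^m` closed congruent subsquares of side `x / 2^m`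
arranged in a `2^m × 2^m` grid. -/
def tile (q : Pt) (x : ℝ) (m : ℕ) (a b : ℕ) : Set Pt :=
  {y | y 0 ∈ Set.Icc (q 0 - x / 2 + a * (x / 2 ^ m)) (q 0 - x / 2 + (a + 1) * (x / 2 ^ m)) ∧
       y 1 ∈ Set.Icc (q 1 - x / 2 + b * (x / 2 ^ m)) (q 1 - x / 2 + (b + 1) * (x / 2 ^ m))}

/-- `t` is a tile of `Tiling(m)` of the square with center `q` and side length `x`. -/
def IsTile (q : Pt) (x : ℝ) (m : ℕ) (t : Set Pt) : Prop :=
  ∃ a b : ℕ, a < 2 ^ m ∧ b < 2 ^ m ∧ t = tile q x m a b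

/-- The `k`-th piece of `Slicing(i)` of the square with center `q` and side length `x`:
the part of the square lying in the angular sector bounded by the half-lines from `q` at
direction angles `2πk/2^i` and `2π(k+1)/2^i` (for `i ≥ 3` this piece is a triangle). -/
def slicePiece (q : Pt) (x : ℝ) (i k : ℕ) : Set Pt :=
  {y | ∃ r : ℝ, 0 ≤ r ∧ ∃ θ : ℝ, 2 * π * k / 2 ^ i ≤ θ ∧ θ ≤ 2 * π * (k + 1) / 2 ^ i ∧
    y = q + r • unitDir θ} ∩ square q x

/-- `T` is a triangle of `Slicing(i)` of the square with center `q` and side length `x`. -/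
def IsSliceTriangle (q : Pt) (x : ℝ) (i : ℕ) (T : Set Pt) : Prop :=
  ∃ k : ℕ, k < 2 ^ i ∧ T = slicePiece q x i k

/-- The vertex of `Slicing(i)` on the boundary of the square of side 2 centered at the
origin: the intersection of the `k`-th slicing half-line with the boundary of the square. -/
def sliceVertex (i k : ℕ) : Pt :=
  (max |Real.cos (2 * π * k / 2 ^ i)| |Real.sin (2 * π * k / 2 ^ i)|)⁻¹ •
    unitDir (2 * π * k / 2 ^ i)

/-- The set of side lengths of the triangles of `Slicing(i)` of the square of side 2
centered at the origin (the triangle `k` has vertices `0`, `sliceVertex i k` and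
`sliceVertex i (k+1)`); the ratios of side lengths are independent of the size of the
square. -/
def sideLengths (i : ℕ) : Set ℝ :=
  ⋃ k ∈ Set.Iio (2 ^ i), {‖sliceVertex i k‖, dist (sliceVertex i k) (sliceVertex i (k + 1))}

/-- `ρ i`: the maximum of `⌈a/b⌉` over all side lengths `a`, `b` of triangles of
`Slicing(i)` of a square. -/
def rho (i : ℕ) : ℕ :=
  sSup {n : ℕ | ∃ a ∈ sideLengths i, ∃ b ∈ sideLengths i, n = ⌈a / b⌉₊}

/-- `φ(i) = i · ρ i`. -/
def phi (i : ℕ) : ℕ := i * rho i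

/-- `index(α) = 4 · φ(max(3, ⌈log₂(2π/α)⌉ + 1))`. -/
def index (α : ℝ) : ℕ := 4 * phi (max 3 (⌈Real.logb 2 (2 * π / α)⌉ + 1)).toNat

/-!
The quarter-turn about the centre of `S` and the reflection in its diagonal permute both the
tiles (keeping boundary tiles on the boundary) and the triangles of `Slicing(i)`, so it suffices
to treat a triangle between the angles `α < β ≤ π/4`. It meets the right side of `S` in a
segment of length `(x/2)(tan β - tan α) ≥ (x/2) sin (β - α) ≥ 2x/2^i`, which is at least three
tile sides as soon as `m ≥ i + 1`; so some tile of the last column lies inside the triangle.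
Finally `ρ_i ≥ 1` (take `a = b`), so `4φ(i) - 2 ≥ 4i - 2 ≥ i + 1`.
-/

lemma sideLengths_finite (i : ℕ) : (sideLengths i).Finite :=
  (Set.finite_Iio _).biUnion fun _ _ => Set.toFinite _

lemma norm_sliceVertex_zero (i : ℕ) : ‖sliceVertex i 0‖ = 1 := by
  simp [sliceVertex, unitDir, EuclideanSpace.norm_eq]

lemma one_mem_sideLengths (i : ℕ) : (1 : ℝ) ∈ sideLengths i := by
  rw [← norm_sliceVertex_zero i]
  exact Set.mem_biUnion (Set.mem_Iio.2 (Nat.two_pow_pos i)) (Set.mem_insert _ _)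

/-- `rho i` is an `sSup` in `ℕ`, hence `0` if the ratios were unbounded; finiteness of
`sideLengths i` rules that out. -/
lemma one_le_rho (i : ℕ) : 1 ≤ rho i := by
  have hfin := sideLengths_finite i
  refine le_csSup ((hfin.image2 (fun a b => ⌈a / b⌉₊) hfin).bddAbove.mono ?_)
    ⟨1, one_mem_sideLengths i, 1, one_mem_sideLengths i, by simp⟩
  rintro _ ⟨a, ha, b, hb, rfl⟩
  exact ⟨a, ha, b, hb, rfl⟩

lemma le_phi (i : ℕ) : i ≤ phi i := Nat.le_mul_of_pos_right i (one_le_rho i)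

def polarWedge (q : Pt) (α β : ℝ) : Set Pt :=
  {y | ∃ r : ℝ, 0 ≤ r ∧ ∃ θ : ℝ, α ≤ θ ∧ θ ≤ β ∧ y = q + r • unitDir θ}

section PolarWedge

variable {q y z : Pt} {α β : ℝ}

lemma eq_add_smul_unitDir_iff {r θ : ℝ} :
    y = q + r • unitDir θ ↔ y 0 - q 0 = r * cos θ ∧ y 1 - q 1 = r * sin θ := by
  constructor
  · rintro rfl
    simp [unitDir]
  · rintro ⟨h0, h1⟩
    ext j
    fin_cases j <;> simp [unitDir] <;> linarith

lemma mem_polarWedge_iff :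
    y ∈ polarWedge q α β ↔ ∃ r, 0 ≤ r ∧ ∃ θ, α ≤ θ ∧ θ ≤ β ∧
      y 0 - q 0 = r * cos θ ∧ y 1 - q 1 = r * sin θ := by
  simp only [polarWedge, Set.mem_ofPred_eq, eq_add_smul_unitDir_iff]

lemma mem_polarWedge_of_rotate (hz : z ∈ polarWedge q α β)
    (h0 : z 0 - q 0 = y 1 - q 1) (h1 : z 1 - q 1 = -(y 0 - q 0)) :
    y ∈ polarWedge q (α + π / 2) (β + π / 2) := by
  obtain ⟨r, hr, θ, hαθ, hθβ, e0, e1⟩ := mem_polarWedge_iff.1 hz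
  refine mem_polarWedge_iff.2 ⟨r, hr, θ + π / 2, by linarith, by linarith, ?_, ?_⟩
  · rw [cos_add_pi_div_two]; linarith
  · rw [sin_add_pi_div_two]; linarith

lemma mem_polarWedge_of_swap (hz : z ∈ polarWedge q α β)
    (h0 : z 0 - q 0 = y 1 - q 1) (h1 : z 1 - q 1 = y 0 - q 0) :
    y ∈ polarWedge q (π / 2 - β) (π / 2 - α) := by
  obtain ⟨r, hr, θ, hαθ, hθβ, e0, e1⟩ := mem_polarWedge_iff.1 hz
  refine mem_polarWedge_iff.2 ⟨r, hr, π / 2 - θ, by linarith, by linarith, ?_, ?_⟩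
  · rw [cos_pi_div_two_sub]; linarith
  · rw [sin_pi_div_two_sub]; linarith

lemma mem_polarWedge_of_tan_le (hα : α ∈ Set.Ioo (-(π / 2)) (π / 2))
    (hβ : β ∈ Set.Ioo (-(π / 2)) (π / 2)) (hu : 0 < y 0 - q 0)
    (hlow : tan α * (y 0 - q 0) ≤ y 1 - q 1) (hupp : y 1 - q 1 ≤ tan β * (y 0 - q 0)) :
    y ∈ polarWedge q α β := by
  set u := y 0 - q 0
  set v := y 1 - q 1
  have hcos := cos_arctan_pos (v / u)
  refine mem_polarWedge_iff.2
    ⟨u / cos (arctan (v / u)), by positivity, arctan (v / u), ?_, ?_, ?_, ?_⟩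
  · rw [← arctan_tan hα.1 hα.2]
    exact arctan_mono ((le_div_iff₀ hu).2 hlow)
  · rw [← arctan_tan hβ.1 hβ.2]
    exact arctan_mono ((div_le_iff₀ hu).2 hupp)
  · exact (div_mul_cancel₀ u hcos.ne').symm
  · rw [div_mul_eq_mul_div, mul_div_assoc, ← tan_eq_sin_div_cos, tan_arctan,
      mul_div_cancel₀ v hu.ne']

end PolarWedge

lemma two_pow_mul_div_two_pow (x : ℝ) (m : ℕ) : 2 ^ m * (x / 2 ^ m) = x :=
  mul_div_cancel₀ x (by positivity)

section Tiles

variable {q y : Pt} {x : ℝ} {m a b : ℕ}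

lemma cast_two_pow_sub_one_sub (hb : b < 2 ^ m) :
    ((2 ^ m - 1 - b : ℕ) : ℝ) = 2 ^ m - 1 - b := by
  rw [Nat.cast_sub (by omega), Nat.cast_sub Nat.one_le_two_pow]
  push_cast
  ring

lemma tile_subset_square (hx : 0 ≤ x) (ha : a < 2 ^ m) (hb : b < 2 ^ m) :
    tile q x m a b ⊆ square q x := by
  have hs : 0 ≤ x / 2 ^ m := by positivity
  have hcol : ∀ c : ℕ, c < 2 ^ m →
      0 ≤ (c : ℝ) * (x / 2 ^ m) ∧ ((c : ℝ) + 1) * (x / 2 ^ m) ≤ x := by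
    intro c hc
    have hc' : (c : ℝ) + 1 ≤ 2 ^ m := by exact_mod_cast hc
    exact ⟨by positivity,
      (mul_le_mul_of_nonneg_right hc' hs).trans (two_pow_mul_div_two_pow x m).le⟩
  rintro y ⟨⟨h1, h2⟩, h3, h4⟩
  obtain ⟨ha0, ha1⟩ := hcol a ha
  obtain ⟨hb0, hb1⟩ := hcol b hb
  exact ⟨⟨by linarith, by linarith⟩, by linarith, by linarith⟩

lemma rotate_mem_tile (hb : b < 2 ^ m) (hy : y ∈ tile q x m (2 ^ m - 1 - b) a) :
    !₂[q 0 + (y 1 - q 1), q 1 - (y 0 - q 0)] ∈ tile q x m a b := by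
  obtain ⟨⟨h1, h2⟩, h3, h4⟩ := hy
  rw [cast_two_pow_sub_one_sub hb] at h1 h2
  have hx := two_pow_mul_div_two_pow x m
  refine ⟨⟨?_, ?_⟩, ?_, ?_⟩ <;> simp <;> linarith

lemma swap_mem_tile (hy : y ∈ tile q x m b a) :
    !₂[q 0 + (y 1 - q 1), q 1 + (y 0 - q 0)] ∈ tile q x m a b := by
  obtain ⟨⟨h1, h2⟩, h3, h4⟩ := hy
  refine ⟨⟨?_, ?_⟩, ?_, ?_⟩ <;> simp <;> linarith

end Tiles

def sliceAngle (i k : ℕ) : ℝ := 2 * π * k / 2 ^ i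

lemma slicePiece_eq (q : Pt) (x : ℝ) (i k : ℕ) :
    slicePiece q x i k = polarWedge q (sliceAngle i k) (sliceAngle i (k + 1)) ∩ square q x := by
  rw [sliceAngle, sliceAngle, Nat.cast_succ]
  rfl

lemma sliceAngle_nonneg (i k : ℕ) : 0 ≤ sliceAngle i k := by
  unfold sliceAngle
  positivity

lemma sliceAngle_succ (i k : ℕ) : sliceAngle i (k + 1) = sliceAngle i k + 2 * π / 2 ^ i := by
  simp only [sliceAngle, Nat.cast_succ]
  ring

lemma sliceAngle_eq_pi_div_two_mul_div {i : ℕ} (hi : 2 ≤ i) (k : ℕ) :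
    sliceAngle i k = π / 2 * k / 2 ^ (i - 2) := by
  obtain ⟨j, rfl⟩ : ∃ j, i = j + 2 := ⟨i - 2, by omega⟩
  simp only [sliceAngle, Nat.add_sub_cancel, pow_add]
  field_simp

lemma sliceAngle_add_quarter {i : ℕ} (hi : 2 ≤ i) (k : ℕ) :
    sliceAngle i (k + 2 ^ (i - 2)) = sliceAngle i k + π / 2 := by
  simp only [sliceAngle_eq_pi_div_two_mul_div hi]
  push_cast
  field_simp

lemma sliceAngle_quarter_sub {i k : ℕ} (hi : 2 ≤ i) (hk : k ≤ 2 ^ (i - 2)) :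
    sliceAngle i (2 ^ (i - 2) - k) = π / 2 - sliceAngle i k := by
  simp only [sliceAngle_eq_pi_div_two_mul_div hi]
  rw [Nat.cast_sub hk]
  push_cast
  field_simp

lemma sliceAngle_le_pi_div_four {i k : ℕ} (hi : 3 ≤ i) (hk : k ≤ 2 ^ (i - 3)) :
    sliceAngle i k ≤ π / 4 := by
  have hk' : (k : ℝ) ≤ 2 ^ (i - 3) := by exact_mod_cast hk
  obtain ⟨j, rfl⟩ : ∃ j, i = j + 3 := ⟨i - 3, by omega⟩
  simp only [sliceAngle, Nat.add_sub_cancel] at hk' ⊢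
  rw [div_le_div_iff₀ (by positivity) (by norm_num), pow_add]
  nlinarith [pi_pos]

lemma sin_sub_le_tan_sub_tan {α β : ℝ} (hα : -(π / 2) < α) (hαβ : α ≤ β) (hβ : β < π / 2) :
    sin (β - α) ≤ tan β - tan α := by
  have hcα : 0 < cos α := cos_pos_of_mem_Ioo ⟨hα, by linarith⟩
  have hcβ : 0 < cos β := cos_pos_of_mem_Ioo ⟨by linarith, hβ⟩
  have hsin : 0 ≤ sin (β - α) := sin_nonneg_of_nonneg_of_le_pi (by linarith) (by linarith)
  have htan : tan β - tan α = sin (β - α) / (cos β * cos α) := by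
    rw [tan_eq_sin_div_cos, tan_eq_sin_div_cos, sin_sub]
    field_simp
  rw [htan]
  exact le_div_self hsin (by positivity) (mul_le_one₀ (cos_le_one β) hcα.le (cos_le_one α))

lemma four_div_two_pow_le_tan_sub_tan {i k : ℕ} (hi : 3 ≤ i) (hk : k < 2 ^ (i - 3)) :
    4 / 2 ^ i ≤ tan (sliceAngle i (k + 1)) - tan (sliceAngle i k) := by
  have hβ := sliceAngle_le_pi_div_four hi hk
  have hα := sliceAngle_nonneg i k
  have hδ := sliceAngle_succ i k
  have hpi := pi_pos
  have hwidth : 0 < 2 * π / 2 ^ i := by positivity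
  have h8 : (8 : ℝ) ≤ 2 ^ i := by
    calc (8 : ℝ) = 2 ^ 3 := by norm_num
      _ ≤ 2 ^ i := pow_le_pow_right₀ one_le_two hi
  calc 4 / 2 ^ i = 2 / π * (2 * π / 2 ^ i) := by field_simp; ring
    _ ≤ sin (2 * π / 2 ^ i) :=
      mul_le_sin (by positivity) (by rw [div_le_div_iff₀ (by positivity) two_pos]; nlinarith)
    _ = sin (sliceAngle i (k + 1) - sliceAngle i k) := by rw [hδ, add_sub_cancel_left]
    _ ≤ _ := sin_sub_le_tan_sub_tan (by linarith) (by linarith) (by linarith)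

lemma exists_tile_subset_polarWedge {q : Pt} {x α β : ℝ} {m : ℕ} (hx : 0 < x) (hα : 0 ≤ α)
    (hαβ : α ≤ β) (hβ : β ≤ π / 4) (hgap : 3 * (x / 2 ^ m) ≤ x / 2 * (tan β - tan α)) :
    ∃ b < 2 ^ m, tile q x m (2 ^ m - 1) b ⊆ polarWedge q α β := by
  set s := x / 2 ^ m
  have hs : 0 < s := by positivity
  have hxs : 2 ^ m * s = x := two_pow_mul_div_two_pow x m
  have hpi := pi_pos
  have htα : 0 ≤ tan α := tan_nonneg_of_nonneg_of_le_pi_div_two hα (by linarith)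
  have htβ : tan β ≤ 1 := tan_pi_div_four ▸
    strictMonoOn_tan.monotoneOn ⟨by linarith, by linarith⟩ ⟨by linarith, by linarith⟩ hβ
  have htβ' : x / 2 * tan β ≤ x / 2 := mul_le_of_le_one_right (by positivity) htβ
  -- the lowest row lying above the ray of angle `α` along the right side; `hgap` leaves room
  -- for it below the ray of angle `β`
  set b := ⌈x / 2 * (1 + tan α) / s⌉₊
  have hb₁ : x / 2 * (1 + tan α) ≤ b * s := (div_le_iff₀ hs).1 (Nat.le_ceil _)
  have hb₂ : (b : ℝ) * s < x / 2 * (1 + tan α) + s := by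
    have h := mul_lt_mul_of_pos_right
      (Nat.ceil_lt_add_one (a := x / 2 * (1 + tan α) / s) (by positivity)) hs
    rwa [add_mul, div_mul_cancel₀ _ hs.ne', one_mul] at h
  have hsx : 3 * s ≤ x / 2 := by nlinarith
  have hb : b < 2 ^ m := by
    have h : (b : ℝ) * s < 2 ^ m * s := by linarith
    exact_mod_cast lt_of_mul_lt_mul_right h hs.le
  refine ⟨b, hb, fun y ⟨⟨h1, h2⟩, h3, h4⟩ => ?_⟩
  rw [Nat.cast_sub Nat.one_le_two_pow] at h1 h2
  push_cast at h1 h2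
  have hu : x / 2 - s ≤ y 0 - q 0 := by linarith
  have htβ0 : 0 ≤ tan β := tan_nonneg_of_nonneg_of_le_pi_div_two (by linarith) (by linarith)
  refine mem_polarWedge_of_tan_le ⟨by linarith, by linarith⟩ ⟨by linarith, by linarith⟩
    (by linarith) ?_ ?_
  · have := mul_le_mul_of_nonneg_left (show y 0 - q 0 ≤ x / 2 by linarith) htα
    linarith
  · have := mul_le_mul_of_nonneg_left hu htβ0
    have := mul_le_of_le_one_left hs.le htβ
    linarith

section Slicing

variable {q : Pt} {x : ℝ} {i m k a b : ℕ}

lemma tile_rotate_subset_slicePiece (hi : 2 ≤ i) (hx : 0 ≤ x) (ha : a < 2 ^ m) (hb : b < 2 ^ m)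
    (h : tile q x m a b ⊆ slicePiece q x i k) :
    tile q x m (2 ^ m - 1 - b) a ⊆ slicePiece q x i (k + 2 ^ (i - 2)) := by
  intro y hy
  rw [slicePiece_eq] at h ⊢
  rw [add_right_comm, sliceAngle_add_quarter hi, sliceAngle_add_quarter hi]
  refine ⟨mem_polarWedge_of_rotate (h (rotate_mem_tile hb hy)).1 ?_ ?_,
    tile_subset_square hx (by omega) ha hy⟩ <;> simp

lemma tile_swap_subset_slicePiece (hi : 2 ≤ i) (hx : 0 ≤ x) (ha : a < 2 ^ m) (hb : b < 2 ^ m)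
    (hk : k < 2 ^ (i - 2)) (h : tile q x m a b ⊆ slicePiece q x i k) :
    tile q x m b a ⊆ slicePiece q x i (2 ^ (i - 2) - 1 - k) := by
  intro y hy
  rw [slicePiece_eq] at h ⊢
  rw [show 2 ^ (i - 2) - 1 - k = 2 ^ (i - 2) - (k + 1) by omega,
    show 2 ^ (i - 2) - (k + 1) + 1 = 2 ^ (i - 2) - k by omega,
    sliceAngle_quarter_sub hi hk, sliceAngle_quarter_sub hi hk.le]
  refine ⟨mem_polarWedge_of_swap (h (swap_mem_tile hy)).1 ?_ ?_,
    tile_subset_square hx hb ha hy⟩ <;> simp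

def HasBoundaryTile (q : Pt) (x : ℝ) (m : ℕ) (S : Set Pt) : Prop :=
  ∃ a b : ℕ, a < 2 ^ m ∧ b < 2 ^ m ∧ tile q x m a b ⊆ S ∧
    (a = 0 ∨ a = 2 ^ m - 1 ∨ b = 0 ∨ b = 2 ^ m - 1)

lemma HasBoundaryTile.slicePiece_add_quarter (hi : 2 ≤ i) (hx : 0 ≤ x)
    (h : HasBoundaryTile q x m (slicePiece q x i k)) :
    HasBoundaryTile q x m (slicePiece q x i (k + 2 ^ (i - 2))) := by
  obtain ⟨a, b, ha, hb, hsub, hbd⟩ := h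
  exact ⟨2 ^ m - 1 - b, a, by omega, ha, tile_rotate_subset_slicePiece hi hx ha hb hsub,
    by omega⟩

lemma HasBoundaryTile.slicePiece_add_mul_quarter (hi : 2 ≤ i) (hx : 0 ≤ x)
    (h : HasBoundaryTile q x m (slicePiece q x i k)) (n : ℕ) :
    HasBoundaryTile q x m (slicePiece q x i (k + n * 2 ^ (i - 2))) := by
  induction n with
  | zero => simpa using h
  | succ n ih => simpa [add_mul, ← add_assoc] using ih.slicePiece_add_quarter hi hx

lemma exists_last_column_tile_subset_slicePiece (hi : 3 ≤ i) (hm : i + 1 ≤ m) (hx : 0 < x)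
    (hk : k < 2 ^ (i - 3)) :
    ∃ b < 2 ^ m, tile q x m (2 ^ m - 1) b ⊆ slicePiece q x i k := by
  have hgap : 3 * (x / 2 ^ m) ≤ x / 2 * (4 / 2 ^ i) := by
    have hpow : (2 : ℝ) ^ (i + 1) ≤ 2 ^ m := pow_le_pow_right₀ one_le_two hm
    rw [pow_succ] at hpow
    calc 3 * (x / 2 ^ m) ≤ 3 * (x / (2 ^ i * 2)) := by gcongr
      _ ≤ x / 2 * (4 / 2 ^ i) := by field_simp; linarith
  obtain ⟨b, hb, hsub⟩ := exists_tile_subset_polarWedge (q := q) hx (sliceAngle_nonneg i k)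
    (by rw [sliceAngle_succ]; exact le_add_of_nonneg_right (by positivity))
    (sliceAngle_le_pi_div_four hi hk)
    (hgap.trans (by gcongr; exact four_div_two_pow_le_tan_sub_tan hi hk))
  refine ⟨b, hb, fun y hy => ?_⟩
  rw [slicePiece_eq]
  exact ⟨hsub hy, tile_subset_square hx.le (by omega) hb hy⟩

lemma hasBoundaryTile_slicePiece_of_lt_quarter (hi : 3 ≤ i) (hm : i + 1 ≤ m) (hx : 0 < x)
    (hk : k < 2 ^ (i - 2)) : HasBoundaryTile q x m (slicePiece q x i k) := by
  have hquarter : 2 ^ (i - 2) = 2 * 2 ^ (i - 3) := by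
    rw [← pow_succ']; congr 1; omega
  rcases lt_or_ge k (2 ^ (i - 3)) with hk' | hk'
  · obtain ⟨b, hb, hsub⟩ := exists_last_column_tile_subset_slicePiece (q := q) hi hm hx hk'
    exact ⟨2 ^ m - 1, b, by omega, hb, hsub, by omega⟩
  · obtain ⟨b, hb, hsub⟩ := exists_last_column_tile_subset_slicePiece (q := q)
      (k := 2 ^ (i - 2) - 1 - k) hi hm hx (by omega)
    have h := tile_swap_subset_slicePiece (by omega) hx.le (by omega) hb (by omega) hsub
    rw [show 2 ^ (i - 2) - 1 - (2 ^ (i - 2) - 1 - k) = k by omega] at h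
    exact ⟨b, 2 ^ m - 1, hb, by omega, h, by omega⟩

lemma hasBoundaryTile_slicePiece (hi : 3 ≤ i) (hm : i + 1 ≤ m) (hx : 0 < x) (k : ℕ) :
    HasBoundaryTile q x m (slicePiece q x i k) := by
  have h := (hasBoundaryTile_slicePiece_of_lt_quarter (q := q) hi hm hx
    (Nat.mod_lt k (Nat.two_pow_pos (i - 2)))).slicePiece_add_mul_quarter (by omega) hx.le
      (k / 2 ^ (i - 2))
  rwa [Nat.mod_add_div'] at h

end Slicing

/-- For every integer `i ≥ 3`, every axis-aligned square `S` and every triangle `T` of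
`Slicing(i)` of `S`, there is a tile of `Tiling(4φ(i) − 2)` of `S` contained in `T` and
having one of its sides contained in a side of `S` (i.e., lying in the boundary row or
column of the grid of tiles). -/
theorem slice_triangle_contains_boundary_tile (i : ℕ) (hi : 3 ≤ i)
    (q : Pt) (x : ℝ) (hx : 0 < x)
    (T : Set Pt) (hT : IsSliceTriangle q x i T) :
    ∃ a b : ℕ, a < 2 ^ (4 * phi i - 2) ∧ b < 2 ^ (4 * phi i - 2) ∧
      tile q x (4 * phi i - 2) a b ⊆ T ∧
      (a = 0 ∨ a = 2 ^ (4 * phi i - 2) - 1 ∨ b = 0 ∨ b = 2 ^ (4 * phi i - 2) - 1) := by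
  obtain ⟨k, -, rfl⟩ := hT
  have := le_phi i
  exact hasBoundaryTile_slicePiece hi (by omega) hx k
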